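/- Let X = (x₁,…,x_n) be a dataset in ℝ^p, h = ⌊(n+1)/2⌋, and m ≤ ⌊(n−1)/2⌋. Let X* be a dataset obtained from X by replacing the last m points, keeping x₁,…,x_{n−m} unchanged. Let θ₀ ∈ ℝ^p be such that c₂ := max_{1≤i≤n−m} ‖x_i − θ₀‖ < ∞ is a bound on the distances from θ₀ to the retained original points, and let θ ∈ ℝ^p be any point whose LTS objective on X* does not exceed that of θ₀, i.e., Σ_{j=1}^h d²_{(j)}(X*, θ) ≤ Σ_{j=1}^h d²_{(j)}(X*, θ₀), where d_{(j)}(Y, θ) denotes the j-th smallest of the distances ‖y_i − θ‖. Then there exists a retained original point x_j (1 ≤ j ≤ n−m) with ‖x_j − θ‖² ≤ Σ_{j=1}^h d²_{(j)}(X*, θ₀) ≤ (h c₂)², and consequently ‖θ − θ₀‖ ≤ h c₂ + c₂, so θ lies at bounded distance from θ₀. -/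

import Mathlib

open MeasureTheory

/-- The sum of the `h` smallest values of `v 0, …, v (n-1)`: the minimum, over index sets
`I` of cardinality `h`, of `∑ i ∈ I, v i`.  Applied to the squared distances
`v i = ‖yᵢ − θ‖²` this is the LTS objective `∑_{j=1}^h d²_{(j)}(Y, θ)`. -/
noncomputable def trimmedSum {n : ℕ} (h : ℕ) (v : Fin n → ℝ) : ℝ :=
  sInf {s : ℝ | ∃ I : Finset (Fin n), I.card = h ∧ s = ∑ i ∈ I, v i}

/-!
Among the `h` points nearest to `θ` fewer than `h` are replaced, so one of them, `x_j`, is an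
original point; its squared distance to `θ` is at most the LTS objective at `θ`, hence at most the
objective at `θ₀`, which is at most `h c₂²` (sum over `h` retained points). The triangle inequality
through `x_j` then bounds `‖θ − θ₀‖`.
-/

section TrimmedSum

variable {n h : ℕ}

lemma finite_trimmedSum_set (v : Fin n → ℝ) :
    {s : ℝ | ∃ I : Finset (Fin n), I.card = h ∧ s = ∑ i ∈ I, v i}.Finite :=
  (Set.finite_range fun I : Finset (Fin n) => ∑ i ∈ I, v i).subset
    fun _ ⟨I, _, hs⟩ => ⟨I, hs.symm⟩

lemma trimmedSum_le_sum (v : Fin n → ℝ) {I : Finset (Fin n)} (hI : I.card = h) :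
    trimmedSum h v ≤ ∑ i ∈ I, v i :=
  csInf_le (finite_trimmedSum_set v).bddBelow ⟨I, hI, rfl⟩

lemma exists_card_eq_trimmedSum_eq_sum (hhn : h ≤ n) (v : Fin n → ℝ) :
    ∃ I : Finset (Fin n), I.card = h ∧ trimmedSum h v = ∑ i ∈ I, v i := by
  obtain ⟨I, -, hI⟩ := Finset.exists_subset_card_eq (s := Finset.univ)
    (by simpa using hhn : h ≤ (Finset.univ : Finset (Fin n)).card)
  have hne : {s : ℝ | ∃ I : Finset (Fin n), I.card = h ∧ s = ∑ i ∈ I, v i}.Nonempty :=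
    ⟨_, I, hI, rfl⟩
  obtain ⟨J, hJ, hs⟩ := hne.csInf_mem (finite_trimmedSum_set v)
  exact ⟨J, hJ, hs⟩

lemma trimmedSum_le_mul (hhn : h ≤ n) {v : Fin n → ℝ} {c : ℝ}
    (hv : ∀ i : Fin n, (i : ℕ) < h → v i ≤ c) :
    trimmedSum h v ≤ h * c := by
  set I := (Finset.univ : Finset (Fin h)).map (Fin.castLEEmb hhn)
  have hI : I.card = h := by simp [I]
  calc trimmedSum h v ≤ ∑ i ∈ I, v i := trimmedSum_le_sum v hI
    _ ≤ I.card • c := Finset.sum_le_card_nsmul _ _ _ fun i hi => by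
        obtain ⟨k, -, rfl⟩ := Finset.mem_map.mp hi
        exact hv _ k.isLt
    _ = h * c := by rw [hI, nsmul_eq_mul]

lemma Finset.exists_mem_val_lt_sub_of_lt_card {m : ℕ} {I : Finset (Fin n)} (hI : m < I.card) :
    ∃ j ∈ I, (j : ℕ) < n - m := by
  by_contra! hlarge
  have : I.card ≤ (Finset.Ico (n - m) n).card :=
    Finset.card_le_card_of_injOn Fin.val
      (fun j hj => Finset.mem_Ico.mpr ⟨hlarge j hj, j.isLt⟩) Fin.val_injective.injOn
  rw [Nat.card_Ico] at this
  omega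

lemma exists_val_lt_sub_le_trimmedSum {m : ℕ} (hhn : h ≤ n) (hmh : m < h) {v : Fin n → ℝ}
    (hv : ∀ i, 0 ≤ v i) :
    ∃ j : Fin n, (j : ℕ) < n - m ∧ v j ≤ trimmedSum h v := by
  obtain ⟨I, hIcard, hIsum⟩ := exists_card_eq_trimmedSum_eq_sum hhn v
  obtain ⟨j, hjI, hj⟩ := Finset.exists_mem_val_lt_sub_of_lt_card (hIcard ▸ hmh)
  exact ⟨j, hj, hIsum ▸ Finset.single_le_sum (fun i _ => hv i) hjI⟩

end TrimmedSum

/-- **quantitative step in the k-step LTS breakdown proof.** Let `X` be a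
dataset of `n ≥ 1` points in `ℝ^p`, `h = ⌊(n+1)/2⌋`, `m ≤ ⌊(n−1)/2⌋`, and let `X*` be
obtained from `X` by replacing the last `m` points (keeping `x₁,…,x_{n−m}`).  Let `θ₀` be a
point with `‖xᵢ − θ₀‖ ≤ c₂` for every retained original point, and let `θ` be any point
whose LTS objective on `X*` does not exceed that of `θ₀`.  Then some retained original point
`x_j` satisfies `‖x_j − θ‖² ≤ ∑_{j=1}^h d²_{(j)}(X*, θ₀) ≤ (h c₂)²`, and consequently
`‖θ − θ₀‖ ≤ h c₂ + c₂`. -/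
theorem kstep_lts_bounded_key_step
    {p n : ℕ} (hn : 1 ≤ n)
    (X Xstar : Fin n → EuclideanSpace ℝ (Fin p))
    (h m : ℕ) (hh : h = (n + 1) / 2) (hm : m ≤ (n - 1) / 2)
    (hkeep : ∀ i : Fin n, (i : ℕ) < n - m → Xstar i = X i)
    (θ₀ : EuclideanSpace ℝ (Fin p)) (c₂ : ℝ)
    (hc₂ : ∀ i : Fin n, (i : ℕ) < n - m → ‖X i - θ₀‖ ≤ c₂)
    (θ : EuclideanSpace ℝ (Fin p))
    (hobj : trimmedSum h (fun i => ‖Xstar i - θ‖ ^ 2) ≤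
      trimmedSum h (fun i => ‖Xstar i - θ₀‖ ^ 2)) :
    (∃ j : Fin n, (j : ℕ) < n - m ∧
      ‖X j - θ‖ ^ 2 ≤ trimmedSum h (fun i => ‖Xstar i - θ₀‖ ^ 2) ∧
      trimmedSum h (fun i => ‖Xstar i - θ₀‖ ^ 2) ≤ ((h : ℝ) * c₂) ^ 2) ∧
    ‖θ - θ₀‖ ≤ (h : ℝ) * c₂ + c₂ := by
  have hhnm : h ≤ n - m := by omega
  obtain ⟨j, hj, hjθ⟩ := exists_val_lt_sub_le_trimmedSum (by omega : h ≤ n) (by omega : m < h)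
    (fun i => sq_nonneg ‖Xstar i - θ‖)
  rw [hkeep j hj] at hjθ
  have hc₂0 : 0 ≤ c₂ := (norm_nonneg _).trans (hc₂ j hj)
  have hθ₀ : trimmedSum h (fun i => ‖Xstar i - θ₀‖ ^ 2) ≤ ((h : ℝ) * c₂) ^ 2 :=
    calc trimmedSum h (fun i => ‖Xstar i - θ₀‖ ^ 2) ≤ h * c₂ ^ 2 :=
          trimmedSum_le_mul (by omega) fun i hi => by
            rw [hkeep i (by omega)]
            exact pow_le_pow_left₀ (norm_nonneg _) (hc₂ i (by omega)) 2
      _ ≤ ((h : ℝ) * c₂) ^ 2 := by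
          have : (1 : ℝ) ≤ h := by exact_mod_cast (by omega : 1 ≤ h)
          nlinarith [sq_nonneg c₂]
  have hjθ' : ‖X j - θ‖ ≤ h * c₂ :=
    (pow_le_pow_iff_left₀ (norm_nonneg _) (by positivity) two_ne_zero).mp
      ((hjθ.trans hobj).trans hθ₀)
  refine ⟨⟨j, hj, hjθ.trans hobj, hθ₀⟩, ?_⟩
  calc ‖θ - θ₀‖ ≤ ‖θ - X j‖ + ‖X j - θ₀‖ := norm_sub_le_norm_sub_add_norm_sub θ (X j) θ₀
    _ ≤ h * c₂ + c₂ := add_le_add (norm_sub_rev θ (X j) ▸ hjθ') (hc₂ j hj)
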